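/- arXiv:1410.2706 — 3 statements merged into one kernel-verified Lean document; each statement's English description precedes it below -/
import Mathlib

section
/- Let n ≥ 3 be odd, let 0 < a_1 ≤ a_2 ≤ … ≤ a_n, and let A_1,…,A_{(n−1)/2} ≥ 0 with at least one A_k ≠ 0. Define the polynomial Q(x) = (x+a_1)(x+a_2)⋯(x+a_n) + Σ_{k=1}^{(n−1)/2} A_k x^{2k}. Then Q has exactly one real root in the open interval (−∞, −a_n), and Q has at most two real roots in the open interval (−a_2, −a_1). -/
/-!
Put `x = -u`. As `n` is odd, `Q (-u) = ∑ A_k u^{2k} - ∏ (u - a_i)`, so for `u > a_n` the roots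
are the solutions of `∑ A_k u^{2k} / ∏ (u - a_i) = 1`. Each `u^m / ∏ (u - a_i)` with `m < n` is
strictly decreasing on `(a_n, ∞)` and tends to `0`, while `Q (-a_n) > 0`: this gives exactly one
root.

On `(-a_2, -a_1)` the factors `x + a_i`, `i ≥ 2`, are positive, and dividing `Q` by their product
leaves `(x + a_1) + ∑ A_k x^{2k} ∏_{i ≥ 2} (x + a_i)⁻¹`. This is strictly convex, being built from
products of positive, decreasing, convex functions, so it has at most two zeros.
-/

open Finset Set Filter Topology Polynomial

theorem Set.encard_le_two_of_forall_not_lt_lt {α : Type*} [LinearOrder α] {s : Set α}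
    (h : ∀ x ∈ s, ∀ y ∈ s, ∀ z ∈ s, x < y → y < z → False) : s.encard ≤ 2 := by
  by_contra! hs
  obtain ⟨t, hts, ht⟩ := Set.exists_subset_encard_eq (Order.add_one_le_of_lt hs)
  have htfin : t.Finite := Set.finite_of_encard_eq_coe ht
  have hcard : htfin.toFinset.card = 3 := by
    rw [htfin.encard_eq_coe_toFinset_card] at ht
    exact_mod_cast ht
  set f := htfin.toFinset.orderEmbOfFin hcard
  have hf (i : Fin 3) : f i ∈ s := hts (htfin.mem_toFinset.1 (orderEmbOfFin_mem _ _ i))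
  exact h _ (hf 0) _ (hf 1) _ (hf 2) (f.strictMono (by decide)) (f.strictMono (by decide))

theorem StrictConvexOn.encard_setOf_eq_le_two {s : Set ℝ} {f : ℝ → ℝ}
    (hf : StrictConvexOn ℝ s f) (c : ℝ) : {x ∈ s | f x = c}.encard ≤ 2 :=
  Set.encard_le_two_of_forall_not_lt_lt fun x ⟨hx, hfx⟩ y ⟨_, hfy⟩ z ⟨hz, hfz⟩ hxy hyz => by
    have := hf.lt_on_openSegment hx hz (hxy.trans hyz).ne
      (by rw [openSegment_eq_Ioo (hxy.trans hyz)]; exact ⟨hxy, hyz⟩)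
    simp [hfx, hfy, hfz] at this

theorem StrictConvexOn.mul_convexOn {s : Set ℝ} {f g : ℝ → ℝ} (hf : StrictConvexOn ℝ s f)
    (hg : ConvexOn ℝ s g) (hf₀ : ∀ x ∈ s, 0 ≤ f x) (hg₀ : ∀ x ∈ s, 0 < g x)
    (hfg : MonovaryOn f g s) : StrictConvexOn ℝ s (fun x => f x * g x) := by
  refine ⟨hf.1, fun x hx y hy hxy a b ha hb hab => ?_⟩
  have hz := hf.1 hx hy ha.le hb.le hab
  have hrearr := hfg.smul_add_smul_le_smul_add_smul hx hy
  simp only [smul_eq_mul] at hz hrearr ⊢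
  calc f (a * x + b * y) * g (a * x + b * y)
      < (a * f x + b * f y) * g (a * x + b * y) :=
        mul_lt_mul_of_pos_right (by simpa using hf.2 hx hy hxy ha hb hab) (hg₀ _ hz)
    _ ≤ (a * f x + b * f y) * (a * g x + b * g y) :=
        mul_le_mul_of_nonneg_left (by simpa using hg.2 hx hy ha.le hb.le hab)
          (by have := hf₀ x hx; have := hf₀ y hy; positivity)
    _ ≤ a * (f x * g x) + b * (f y * g y) := by
        obtain rfl : b = 1 - a := by linarith
        nlinarith [mul_le_mul_of_nonneg_left hrearr (mul_nonneg ha.le hb.le)]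

theorem ConvexOn.finset_prod {ι : Type*} {s : Set ℝ} {t : Finset ι} {f : ι → ℝ → ℝ}
    (hs : Convex ℝ s) (hf : ∀ i ∈ t, ConvexOn ℝ s (f i)) (hf₀ : ∀ i ∈ t, ∀ x ∈ s, 0 ≤ f i x)
    (hfa : ∀ i ∈ t, AntitoneOn (f i) s) : ConvexOn ℝ s (fun x => ∏ i ∈ t, f i x) := by
  induction t using Finset.cons_induction with
  | empty => simpa using convexOn_const 1 hs
  | cons i t hit ih =>
    simp only [forall_mem_cons] at hf hf₀ hfa
    simp only [prod_cons]
    have hanti : AntitoneOn (fun x => ∏ j ∈ t, f j x) s := fun x hx y hy hxy =>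
      prod_le_prod (fun j hj => hf₀.2 j hj y hy) fun j hj => hfa.2 j hj hx hy hxy
    exact hf.1.mul (ih hf.2 hf₀.2 hfa.2) hf₀.1
      (fun x hx => prod_nonneg fun j hj => hf₀.2 j hj x hx) (hfa.1.monovaryOn hanti)

theorem convexOn_inv_add (c : ℝ) : ConvexOn ℝ (Ioi (-c)) fun x => (x + c)⁻¹ := by
  have h := (convexOn_zpow (𝕜 := ℝ) (-1)).translate_right c
  have hdom : (fun z => c + z) ⁻¹' Ioi 0 = Ioi (-c) := by
    ext x; simp [neg_lt_iff_pos_add']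
  rw [hdom] at h
  exact h.congr fun x _ => by simp [add_comm]

theorem strictAntiOn_pow_div_prod_sub {ι : Type*} [Fintype ι] {c : ι → ℝ} {b : ℝ} {m : ℕ}
    (hc₀ : ∀ i, 0 ≤ c i) (hcb : ∀ i, c i ≤ b) (hm : m < Fintype.card ι) :
    StrictAntiOn (fun u => u ^ m / ∏ i, (u - c i)) (Ioi b) := by
  intro u hu v hv huv
  simp only [Set.mem_Ioi] at hu hv
  have hne : Nonempty ι := Fintype.card_pos_iff.1 (by omega)
  have hu₀ : 0 < u := (hc₀ hne.some).trans_lt ((hcb _).trans_lt hu)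
  have hv₀ : 0 < v := hu₀.trans huv
  have hcu (i) : 0 < u - c i := by linarith [hcb i]
  have hcv (i) : 0 < v - c i := by linarith [hcb i]
  have key : (v / u) ^ m < ∏ i, (v - c i) / (u - c i) :=
    calc (v / u) ^ m < (v / u) ^ Fintype.card ι :=
          pow_lt_pow_right₀ ((one_lt_div hu₀).2 huv) hm
      _ = ∏ _i : ι, v / u := by rw [prod_const, card_univ]
      _ ≤ ∏ i, (v - c i) / (u - c i) := prod_le_prod (fun _ _ => by positivity) fun i _ => by
          rw [div_le_div_iff₀ hu₀ (hcu i)]; nlinarith [hc₀ i]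
  rw [div_pow, prod_div_distrib, div_lt_div_iff₀ (by positivity) (prod_pos fun i _ => hcu i)]
    at key
  rw [div_lt_div_iff₀ (prod_pos fun i _ => hcv i) (prod_pos fun i _ => hcu i)]
  linarith

theorem tendsto_pow_div_prod_sub_atTop {ι : Type*} [Fintype ι] (c : ι → ℝ) {m : ℕ}
    (hm : m < Fintype.card ι) :
    Tendsto (fun u => u ^ m / ∏ i, (u - c i)) atTop (𝓝 0) := by
  have hdeg : (X ^ m : ℝ[X]).degree < (∏ i, (X - C (c i))).degree := by
    have hmonic : (∏ i, (X - C (c i))).Monic := monic_prod_of_monic _ _ fun i _ => monic_X_sub_C _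
    rw [degree_X_pow, degree_eq_natDegree hmonic.ne_zero, natDegree_finsetProd_X_sub_C_eq_card]
    exact_mod_cast hm
  simpa [eval_prod] using div_tendsto_atTop_zero_of_degree_lt _ _ hdeg

theorem strictAntiOn_sum_mul {ι : Type*} {s : Set ℝ} {K : Finset ι} {A : ι → ℝ}
    {φ : ι → ℝ → ℝ} (hφ : ∀ k ∈ K, StrictAntiOn (φ k) s) (hA : ∀ k ∈ K, 0 ≤ A k)
    (hA' : ∃ k ∈ K, A k ≠ 0) : StrictAntiOn (fun x => ∑ k ∈ K, A k * φ k x) s := by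
  obtain ⟨k₀, hk₀, hAk₀⟩ := hA'
  intro x hx y hy hxy
  exact sum_lt_sum (fun k hk => mul_le_mul_of_nonneg_left (hφ k hk hx hy hxy).le (hA k hk))
    ⟨k₀, hk₀, mul_lt_mul_of_pos_left (hφ k₀ hk₀ hx hy hxy) ((hA k₀ hk₀).lt_of_ne' hAk₀)⟩

theorem strictConvexOn_sum_mul {ι : Type*} {s : Set ℝ} {K : Finset ι} {A : ι → ℝ}
    {φ : ι → ℝ → ℝ} (hφ : ∀ k ∈ K, StrictConvexOn ℝ s (φ k)) (hA : ∀ k ∈ K, 0 ≤ A k)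
    (hA' : ∃ k ∈ K, A k ≠ 0) : StrictConvexOn ℝ s fun x => ∑ k ∈ K, A k * φ k x := by
  obtain ⟨k₀, hk₀, hAk₀⟩ := hA'
  refine ⟨(hφ k₀ hk₀).1, fun x hx y hy hxy a b ha hb hab => ?_⟩
  simp only [smul_eq_mul, mul_sum, ← sum_add_distrib]
  have hφk {k} (hk : k ∈ K) := (hφ k hk).2 hx hy hxy ha hb hab
  simp only [smul_eq_mul] at hφk
  refine sum_lt_sum (fun k hk => ?_) ⟨k₀, hk₀, ?_⟩
  · linarith [mul_le_mul_of_nonneg_left (hφk hk).le (hA k hk)]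
  · linarith [mul_lt_mul_of_pos_left (hφk hk₀) ((hA k₀ hk₀).lt_of_ne' hAk₀)]

theorem existsUnique_sum_mul_pow_eq_prod_sub {ι κ : Type*} [Fintype ι] {c : ι → ℝ} {i₀ : ι}
    (hc₀ : ∀ i, 0 ≤ c i) (hmax : ∀ i, c i ≤ c i₀) (hi₀ : 0 < c i₀)
    {K : Finset κ} {A : κ → ℝ} {e : κ → ℕ} (he : ∀ k ∈ K, e k < Fintype.card ι)
    (hA : ∀ k ∈ K, 0 ≤ A k) (hA' : ∃ k ∈ K, A k ≠ 0) :
    ∃! u, c i₀ < u ∧ ∑ k ∈ K, A k * u ^ e k = ∏ i, (u - c i) := by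
  set R := fun u => ∑ k ∈ K, A k * (u ^ e k / ∏ i, (u - c i))
  have hP {u} (hu : c i₀ < u) : 0 < ∏ i, (u - c i) :=
    prod_pos fun i _ => by linarith [hmax i]
  have hR {u} (hu : c i₀ < u) :
      ∑ k ∈ K, A k * u ^ e k - ∏ i, (u - c i) = (R u - 1) * ∏ i, (u - c i) := by
    simp only [R, sum_mul, sub_mul, one_mul, mul_assoc, div_mul_cancel₀ _ (hP hu).ne']
  have hroot {u} (hu : c i₀ < u) : ∑ k ∈ K, A k * u ^ e k = ∏ i, (u - c i) ↔ R u = 1 := by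
    rw [← sub_eq_zero, hR hu, mul_eq_zero, sub_eq_zero, or_iff_left (hP hu).ne']
  have hanti : StrictAntiOn R (Ioi (c i₀)) :=
    strictAntiOn_sum_mul (fun k hk => strictAntiOn_pow_div_prod_sub hc₀ hmax (he k hk)) hA hA'
  have hlim : Tendsto R atTop (𝓝 0) := by
    simpa using tendsto_finsetSum K fun k hk =>
      (tendsto_pow_div_prod_sub_atTop c (he k hk)).const_mul (A k)
  obtain ⟨T, hT, hRT⟩ :=
    ((eventually_gt_atTop (c i₀)).and (hlim.eventually (gt_mem_nhds one_pos))).exists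
  have hcont : Continuous fun u => ∑ k ∈ K, A k * u ^ e k - ∏ i, (u - c i) := by fun_prop
  have hstart : 0 < ∑ k ∈ K, A k * c i₀ ^ e k - ∏ i, (c i₀ - c i) := by
    obtain ⟨k₀, hk₀, hAk₀⟩ := hA'
    rw [prod_eq_zero (mem_univ i₀) (sub_self _), sub_zero]
    exact sum_pos' (fun k hk => mul_nonneg (hA k hk) (pow_nonneg hi₀.le _))
      ⟨k₀, hk₀, mul_pos ((hA k₀ hk₀).lt_of_ne' hAk₀) (pow_pos hi₀ _)⟩
  have hend : ∑ k ∈ K, A k * T ^ e k - ∏ i, (T - c i) < 0 := by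
    rw [hR hT]
    exact mul_neg_of_neg_of_pos (by linarith) (hP hT)
  obtain ⟨u, hu, hfu⟩ := intermediate_value_Ioo' hT.le hcont.continuousOn ⟨hend, hstart⟩
  refine ⟨u, ⟨hu.1, sub_eq_zero.1 hfu⟩, fun v ⟨hv, hSv⟩ => hanti.injOn hv hu.1 ?_⟩
  rw [(hroot hv).1 hSv, (hroot hu.1).1 (sub_eq_zero.1 hfu)]

theorem prod_neg_add_of_odd_card {ι : Type*} [Fintype ι] (hι : Odd (Fintype.card ι))
    (c : ι → ℝ) (u : ℝ) : ∏ i, (-u + c i) = -∏ i, (u - c i) :=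
  calc ∏ i, (-u + c i) = ∏ i, -(u - c i) := prod_congr rfl fun i _ => by ring
    _ = -∏ i, (u - c i) := by rw [prod_neg, card_univ, hι.neg_one_pow, neg_one_mul]

theorem encard_setOf_mul_prod_add_sum_eq_zero_le_two {ι : Type*} {s : Set ℝ}
    (hs : Convex ℝ s) (hs₀ : s ⊆ Iic 0) {t : Finset ι} {c : ι → ℝ}
    (hsc : ∀ i ∈ t, s ⊆ Ioi (-c i)) (d : ℝ) {K : Finset ℕ} {A : ℕ → ℝ} (hK : 0 ∉ K)
    (hA : ∀ k ∈ K, 0 ≤ A k) (hA' : ∃ k ∈ K, A k ≠ 0) :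
    {x ∈ s | (x + d) * ∏ i ∈ t, (x + c i) + ∑ k ∈ K, A k * x ^ (2 * k) = 0}.encard ≤ 2 := by
  set g := fun x => ∏ i ∈ t, (x + c i)⁻¹
  have hpos {x} (hx : x ∈ s) {i} (hi : i ∈ t) : 0 < x + c i := by
    linarith [mem_Ioi.1 (hsc i hi hx)]
  have hinv_anti {i} (hi : i ∈ t) : AntitoneOn (fun x => (x + c i)⁻¹) s :=
    fun x hx y hy hxy => inv_anti₀ (hpos hx hi) (by linarith)
  have hg₀ {x} (hx : x ∈ s) : 0 < g x := prod_pos fun i hi => inv_pos.2 (hpos hx hi)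
  have hg : ConvexOn ℝ s g := ConvexOn.finset_prod hs
    (fun i hi => (convexOn_inv_add (c i)).subset (hsc i hi) hs)
    (fun i hi x hx => (inv_pos.2 (hpos hx hi)).le) fun i hi => hinv_anti hi
  have hga : AntitoneOn g s := fun x hx y hy hxy =>
    prod_le_prod (fun i hi => (inv_pos.2 (hpos hy hi)).le) fun i hi => hinv_anti hi hx hy hxy
  have hψ (k) (hk : k ∈ K) : StrictConvexOn ℝ s fun x => x ^ (2 * k) * g x := by
    have hpow_anti : AntitoneOn (fun x : ℝ => x ^ (2 * k)) s := fun x hx y hy hxy => by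
      show y ^ (2 * k) ≤ x ^ (2 * k)
      rw [← (even_two_mul k).neg_pow x, ← (even_two_mul k).neg_pow y]
      exact pow_le_pow_left₀ (neg_nonneg.2 (hs₀ hy)) (neg_le_neg hxy) _
    exact ((Even.strictConvexOn_pow (even_two_mul k) (by rintro h; simp_all)).subset
      (subset_univ _) hs).mul_convexOn hg (fun x _ => (even_two_mul k).pow_nonneg x)
      (fun x hx => hg₀ hx) (hpow_anti.monovaryOn hga)
  have hG : StrictConvexOn ℝ s fun x => x + d + ∑ k ∈ K, A k * (x ^ (2 * k) * g x) :=
    ((convexOn_id hs).add (convexOn_const d hs)).add_strictConvexOn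
      (strictConvexOn_sum_mul hψ hA hA')
  refine (encard_le_encard ?_).trans (hG.encard_setOf_eq_le_two 0)
  rintro x ⟨hx, hQx⟩
  refine ⟨hx, ?_⟩
  have hDg : (∏ i ∈ t, (x + c i)) * g x = 1 := by
    rw [← prod_mul_distrib]
    exact prod_eq_one fun i hi => mul_inv_cancel₀ (hpos hx hi).ne'
  calc x + d + ∑ k ∈ K, A k * (x ^ (2 * k) * g x)
      = ((x + d) * ∏ i ∈ t, (x + c i) + ∑ k ∈ K, A k * x ^ (2 * k)) * g x := by
        rw [add_mul, sum_mul, mul_assoc, hDg, mul_one]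
        simp only [mul_assoc]
    _ = 0 := by rw [hQx, zero_mul]

theorem lemma1_odd_Q_roots
    (n : ℕ) (hn : 3 ≤ n) (hodd : Odd n)
    (a : Fin n → ℝ) (hpos : ∀ i, 0 < a i) (hmono : Monotone a)
    (A : ℕ → ℝ) (hA : ∀ k ∈ Finset.Icc 1 ((n - 1) / 2), 0 ≤ A k)
    (hA' : ∃ k ∈ Finset.Icc 1 ((n - 1) / 2), A k ≠ 0)
    (Q : ℝ → ℝ)
    (hQ : ∀ x, Q x = (∏ i, (x + a i)) +
      ∑ k ∈ Finset.Icc 1 ((n - 1) / 2), A k * x ^ (2 * k)) :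
    (∃! x, x ∈ Set.Iio (-(a ⟨n - 1, by omega⟩)) ∧ Q x = 0) ∧
    Set.encard {x ∈ Set.Ioo (-(a ⟨1, by omega⟩)) (-(a ⟨0, by omega⟩)) |
      Q x = 0} ≤ 2 := by
  constructor
  · have hQneg (u : ℝ) : Q (-u) =
        ∑ k ∈ Icc 1 ((n - 1) / 2), A k * u ^ (2 * k) - ∏ i, (u - a i) := by
      simp only [hQ, prod_neg_add_of_odd_card (Fintype.card_fin n ▸ hodd),
        (even_two_mul _).neg_pow]
      ring
    obtain ⟨u, ⟨hu, hSu⟩, huniq⟩ := existsUnique_sum_mul_pow_eq_prod_sub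
      (i₀ := ⟨n - 1, by omega⟩) (e := (2 * ·)) (fun i => (hpos i).le)
      (fun i => hmono (Fin.le_iff_val_le_val.2 (by simp; omega))) (hpos _)
      (fun k hk => by simp only [Finset.mem_Icc] at hk; simp; omega) hA hA'
    refine ⟨-u, ⟨neg_lt_neg hu, by rw [hQneg, hSu, sub_self]⟩, fun x ⟨hx, hQx⟩ => ?_⟩
    rw [← neg_neg x, hQneg, sub_eq_zero] at hQx
    rw [← huniq (-x) ⟨lt_neg.1 hx, hQx⟩, neg_neg]
  · have hsplit (x : ℝ) : Q x =
        (x + a ⟨0, by omega⟩) * ∏ i ∈ univ.erase ⟨0, by omega⟩, (x + a i) +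
          ∑ k ∈ Icc 1 ((n - 1) / 2), A k * x ^ (2 * k) := by
      rw [hQ, ← mul_prod_erase univ (fun i => x + a i) (mem_univ _)]
    simp only [hsplit]
    refine encard_setOf_mul_prod_add_sum_eq_zero_le_two (convex_Ioo _ _)
      (fun x hx => (hx.2.trans (neg_lt_zero.2 (hpos _))).le) (fun i hi x hx => ?_) _
      (by simp) hA hA'
    have : a ⟨1, by omega⟩ ≤ a i := hmono (Fin.le_iff_val_le_val.2 (by
      have := Fin.val_ne_of_ne (ne_of_mem_erase hi); simp at this ⊢; omega))
    exact mem_Ioi.2 (by linarith [hx.1])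
end

section
/- Let a_1, a_2, a_3, a_4, b_1, b_2, b_3, b_4 > 0 satisfy a_1+a_2+a_3+a_4 ≤ b_1+b_2+b_3+b_4; a_1a_2+a_1a_3+a_2a_3+a_1a_4+a_2a_4+a_3a_4 ≤ b_1b_2+b_1b_3+b_2b_3+b_1b_4+b_2b_4+b_3b_4; a_1a_2a_3+a_1a_2a_4+a_2a_3a_4+a_1a_3a_4 ≤ b_1b_2b_3+b_1b_2b_4+b_2b_3b_4+b_1b_3b_4; and a_1a_2a_3a_4 = b_1b_2b_3b_4. Then (log a_1)^2+(log a_2)^2+(log a_3)^2+(log a_4)^2 ≤ (log b_1)^2+(log b_2)^2+(log b_3)^2+(log b_4)^2. -/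
/-!
For `x > 0` and `s > 0` put
`K(x, s) = 2 / (s (s + 1)) * ((s + 1) (log (s + x) - log (s + 1)) - log x)`.
Then `log x ^ 2 = ∫₀^∞ K(x, s) ds`: both sides vanish at `x = 1`, and both have derivative
`2 log x / x`, since `∂ₓ K(x, s) = 2 (x - 1) / x * ((s + x) (s + 1))⁻¹` and
`∫₀^∞ ((s + x) (s + 1))⁻¹ ds = log x / (x - 1)`.
Summed over a family `a`, the kernel `∑ᵢ K(aᵢ, s)` is increasing in `∏ᵢ (s + aᵢ)` once `∏ᵢ aᵢ` is
fixed. For four numbers `∏ᵢ (s + aᵢ) = s⁴ + e₁ s³ + e₂ s² + e₃ s + e₄` in the elementary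
symmetric functions, so the hypotheses compare the integrands pointwise.
-/

open Real MeasureTheory Set Filter Topology

section
variable {c : ℝ}

lemma hasDerivAt_log_add_one_sub_log_add_div {s : ℝ} (hc : c ≠ 1) (hs1 : s + 1 ≠ 0)
    (hsc : s + c ≠ 0) :
    HasDerivAt (fun s => (log (s + 1) - log (s + c)) / (c - 1)) ((s + c) * (s + 1))⁻¹ s := by
  refine ((((hasDerivAt_id' s).add_const 1).log hs1).sub
    (((hasDerivAt_id' s).add_const c).log hsc)).div_const (c - 1) |>.congr_deriv ?_
  have : c - 1 ≠ 0 := sub_ne_zero.mpr hc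
  field_simp
  ring

lemma tendsto_log_add_one_sub_log_add (c : ℝ) :
    Tendsto (fun s => log (s + 1) - log (s + c)) atTop (𝓝 0) := by
  simpa using (tendsto_log_comp_add_sub_log 1).sub (tendsto_log_comp_add_sub_log c)

lemma integrableOn_Ioi_inv_add_mul_add_one_of_ne_one (hc : 0 < c) (hc1 : c ≠ 1) :
    IntegrableOn (fun s => ((s + c) * (s + 1))⁻¹) (Ioi 0) :=
  integrableOn_Ioi_deriv_of_nonneg'
    (fun s (hs : 0 ≤ s) =>
      hasDerivAt_log_add_one_sub_log_add_div hc1 (by positivity) (by positivity))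
    (fun s (hs : 0 < s) => by positivity) ((tendsto_log_add_one_sub_log_add c).div_const _)

lemma integrableOn_Ioi_inv_add_mul_add_one (hc : 0 < c) :
    IntegrableOn (fun s => ((s + c) * (s + 1))⁻¹) (Ioi 0) := by
  rcases ne_or_eq c 1 with hc1 | rfl
  · exact integrableOn_Ioi_inv_add_mul_add_one_of_ne_one hc hc1
  refine (integrableOn_Ioi_inv_add_mul_add_one_of_ne_one (c := 1 / 2) (by norm_num)
    (by norm_num)).mono' (by fun_prop) ?_
  filter_upwards [ae_restrict_mem measurableSet_Ioi] with s (hs : 0 < s)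
  rw [norm_inv, norm_mul, Real.norm_of_nonneg (by positivity)]
  gcongr
  norm_num

lemma sub_one_mul_integral_Ioi_inv_add_mul_add_one (hc : 0 < c) :
    (c - 1) * ∫ s in Ioi 0, ((s + c) * (s + 1))⁻¹ = log c := by
  rcases ne_or_eq c 1 with hc1 | rfl
  · rw [integral_Ioi_of_hasDerivAt_of_nonneg'
      (fun s (hs : 0 ≤ s) =>
        hasDerivAt_log_add_one_sub_log_add_div hc1 (by positivity) (by positivity))
      (fun s (hs : 0 < s) => by positivity) ((tendsto_log_add_one_sub_log_add c).div_const _)]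
    field_simp [sub_ne_zero.mpr hc1]
    simp
  · simp

end

noncomputable def logSqKernel (x s : ℝ) : ℝ :=
  2 / (s * (s + 1)) * ((s + 1) * (log (s + x) - log (s + 1)) - log x)

section
variable {x s : ℝ}

@[simp] lemma logSqKernel_one (s : ℝ) : logSqKernel 1 s = 0 := by
  simp [logSqKernel]

lemma measurable_logSqKernel (x : ℝ) : Measurable (logSqKernel x) := by
  unfold logSqKernel
  fun_prop

lemma hasDerivAt_logSqKernel (hx : 0 < x) (hs : 0 < s) :
    HasDerivAt (logSqKernel · s) (2 * (x - 1) / x * ((s + x) * (s + 1))⁻¹) x := by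
  refine (((((hasDerivAt_id' x).const_add s).log (by positivity)).sub_const (log (s + 1))
    |>.const_mul (s + 1)).sub (hasDerivAt_log hx.ne')).const_mul (2 / (s * (s + 1)))
    |>.congr_deriv ?_
  field_simp
  ring

lemma abs_logSqKernel_le (hx : 0 < x) (hs : 0 < s) :
    |logSqKernel x s| ≤ 2 * (x - 1) ^ 2 / min 1 x * ((s + min 1 x) * (s + 1))⁻¹ := by
  set m := min 1 x
  have hm : 0 < m := lt_min one_pos hx
  have hderiv_le : ∀ u ∈ uIcc 1 x,
      ‖2 * (u - 1) / u * ((s + u) * (s + 1))⁻¹‖ ≤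
        2 * |x - 1| / m * ((s + m) * (s + 1))⁻¹ := by
    intro u hu
    have hmu : m ≤ u := hu.1
    have hu0 : 0 < u := hm.trans_le hmu
    rw [norm_mul, norm_div, norm_mul, norm_inv,
      Real.norm_of_nonneg (by positivity : 0 ≤ (s + u) * (s + 1))]
    simp only [Real.norm_eq_abs, abs_two, abs_of_pos hu0]
    gcongr 2 * ?_ / ?_ * ((s + ?_) * (s + 1))⁻¹
    exact abs_sub_left_of_mem_uIcc hu
  have hmvt := Convex.norm_image_sub_le_of_norm_hasDerivWithin_le
    (fun u hu => (hasDerivAt_logSqKernel (hm.trans_le hu.1) hs).hasDerivWithinAt) hderiv_le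
    (convex_uIcc 1 x) left_mem_uIcc right_mem_uIcc
  rw [logSqKernel_one, sub_zero, Real.norm_eq_abs, Real.norm_eq_abs] at hmvt
  calc |logSqKernel x s| ≤ 2 * |x - 1| / m * ((s + m) * (s + 1))⁻¹ * |x - 1| := hmvt
    _ = 2 * (x - 1) ^ 2 / m * ((s + m) * (s + 1))⁻¹ := by
      rw [← sq_abs (x - 1)]
      ring

lemma integrableOn_logSqKernel (hx : 0 < x) : IntegrableOn (logSqKernel x) (Ioi 0) := by
  refine ((integrableOn_Ioi_inv_add_mul_add_one (lt_min one_pos hx)).const_mul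
    (2 * (x - 1) ^ 2 / min 1 x)).mono' (measurable_logSqKernel x).aestronglyMeasurable ?_
  filter_upwards [ae_restrict_mem measurableSet_Ioi] with s hs
  exact abs_logSqKernel_le hx hs

lemma hasDerivAt_integral_logSqKernel (hx : 0 < x) :
    HasDerivAt (fun y => ∫ s in Ioi 0, logSqKernel y s) (2 * log x / x) x := by
  have hx2 : 0 < x / 2 := half_pos hx
  have hbound : ∀ s ∈ Ioi (0 : ℝ), ∀ y ∈ Ioi (x / 2),
      ‖2 * (y - 1) / y * ((s + y) * (s + 1))⁻¹‖ ≤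
        2 * (1 + 2 / x) * ((s + x / 2) * (s + 1))⁻¹ := by
    intro s (hs : 0 < s) y (hy : x / 2 < y)
    have hy0 : 0 < y := hx2.trans hy
    have hfactor : |2 * (y - 1) / y| ≤ 2 * (1 + 2 / x) := by
      rw [abs_div, abs_mul, abs_two, abs_of_pos hy0, div_le_iff₀ hy0]
      have : 1 ≤ 2 / x * y := by rw [div_mul_eq_mul_div, le_div_iff₀ hx]; linarith
      cases abs_cases (y - 1) <;> nlinarith
    rw [norm_mul, norm_inv, Real.norm_eq_abs,
      Real.norm_of_nonneg (by positivity : 0 ≤ (s + y) * (s + 1))]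
    gcongr
  obtain ⟨-, hderiv⟩ := hasDerivAt_integral_of_dominated_loc_of_deriv_le
    (F' := fun y s => 2 * (y - 1) / y * ((s + y) * (s + 1))⁻¹) (Ioi_mem_nhds (half_lt_self hx))
    (Eventually.of_forall fun y => (measurable_logSqKernel y).aestronglyMeasurable)
    (integrableOn_logSqKernel hx) (by fun_prop)
    ((ae_restrict_mem measurableSet_Ioi).mono hbound)
    ((integrableOn_Ioi_inv_add_mul_add_one hx2).const_mul _)
    ((ae_restrict_mem measurableSet_Ioi).mono fun s hs y hy =>
      hasDerivAt_logSqKernel (hx2.trans hy) hs)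
  refine hderiv.congr_deriv ?_
  rw [integral_const_mul, ← sub_one_mul_integral_Ioi_inv_add_mul_add_one hx]
  field_simp

lemma integral_logSqKernel (hx : 0 < x) : ∫ s in Ioi 0, logSqKernel x s = log x ^ 2 := by
  have hlog_sq : ∀ y ∈ Ioi (0 : ℝ), HasDerivAt (fun y => log y ^ 2) (2 * log y / y) y :=
    fun y hy => ((hasDerivAt_log (ne_of_gt hy)).pow 2).congr_deriv (by simp [div_eq_mul_inv])
  refine isOpen_Ioi.eqOn_of_deriv_eq isPreconnected_Ioi
    (fun y hy => (hasDerivAt_integral_logSqKernel hy).differentiableAt.differentiableWithinAt)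
    (fun y hy => (hlog_sq y hy).differentiableAt.differentiableWithinAt)
    (fun y hy => (hasDerivAt_integral_logSqKernel hy).deriv.trans (hlog_sq y hy).deriv.symm)
    (mem_Ioi.mpr one_pos) (by simp) hx

end

section
variable {ι : Type*} {t : Finset ι} {a b : ι → ℝ}

lemma sum_logSqKernel_eq (ha : ∀ i ∈ t, 0 < a i) {s : ℝ} (hs : 0 < s) :
    ∑ i ∈ t, logSqKernel (a i) s = 2 / (s * (s + 1)) *
      ((s + 1) * (log (∏ i ∈ t, (s + a i)) - t.card * log (s + 1)) -
        log (∏ i ∈ t, a i)) := by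
  rw [log_prod fun i hi => (ha i hi).ne', log_prod fun i hi => (add_pos hs (ha i hi)).ne']
  simp only [logSqKernel, ← Finset.mul_sum, Finset.sum_sub_distrib, Finset.sum_const,
    nsmul_eq_mul]

lemma sum_logSqKernel_le (ha : ∀ i ∈ t, 0 < a i) (hb : ∀ i ∈ t, 0 < b i)
    (hprod : ∏ i ∈ t, a i = ∏ i ∈ t, b i) {s : ℝ} (hs : 0 < s)
    (h : ∏ i ∈ t, (s + a i) ≤ ∏ i ∈ t, (s + b i)) :
    ∑ i ∈ t, logSqKernel (a i) s ≤ ∑ i ∈ t, logSqKernel (b i) s := by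
  rw [sum_logSqKernel_eq ha hs, sum_logSqKernel_eq hb hs, hprod]
  have : 0 < ∏ i ∈ t, (s + a i) := Finset.prod_pos fun i hi => add_pos hs (ha i hi)
  gcongr

theorem sum_log_sq_le_of_prod_add_le (ha : ∀ i ∈ t, 0 < a i) (hb : ∀ i ∈ t, 0 < b i)
    (hprod : ∏ i ∈ t, a i = ∏ i ∈ t, b i)
    (h : ∀ s, 0 < s → ∏ i ∈ t, (s + a i) ≤ ∏ i ∈ t, (s + b i)) :
    ∑ i ∈ t, log (a i) ^ 2 ≤ ∑ i ∈ t, log (b i) ^ 2 := by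
  have hintegral : ∀ c : ι → ℝ, (∀ i ∈ t, 0 < c i) →
      ∑ i ∈ t, log (c i) ^ 2 = ∫ s in Ioi 0, ∑ i ∈ t, logSqKernel (c i) s := fun c hc => by
    rw [integral_finsetSum t fun i hi => integrableOn_logSqKernel (hc i hi)]
    exact Finset.sum_congr rfl fun i hi => (integral_logSqKernel (hc i hi)).symm
  rw [hintegral a ha, hintegral b hb]
  exact setIntegral_mono_on
    (integrable_finsetSum t fun i hi => integrableOn_logSqKernel (ha i hi))
    (integrable_finsetSum t fun i hi => integrableOn_logSqKernel (hb i hi)) measurableSet_Ioi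
    fun s hs => sum_logSqKernel_le ha hb hprod hs (h s hs)

end

lemma prod_four_add_le_of_esymm_le {a₁ a₂ a₃ a₄ b₁ b₂ b₃ b₄ s : ℝ} (hs : 0 ≤ s)
    (h1 : a₁ + a₂ + a₃ + a₄ ≤ b₁ + b₂ + b₃ + b₄)
    (h2 : a₁ * a₂ + a₁ * a₃ + a₂ * a₃ + a₁ * a₄ + a₂ * a₄ + a₃ * a₄ ≤
          b₁ * b₂ + b₁ * b₃ + b₂ * b₃ + b₁ * b₄ + b₂ * b₄ + b₃ * b₄)
    (h3 : a₁ * a₂ * a₃ + a₁ * a₂ * a₄ + a₂ * a₃ * a₄ + a₁ * a₃ * a₄ ≤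
          b₁ * b₂ * b₃ + b₁ * b₂ * b₄ + b₂ * b₃ * b₄ + b₁ * b₃ * b₄)
    (h4 : a₁ * a₂ * a₃ * a₄ ≤ b₁ * b₂ * b₃ * b₄) :
    (s + a₁) * (s + a₂) * (s + a₃) * (s + a₄) ≤ (s + b₁) * (s + b₂) * (s + b₃) * (s + b₄) := by
  nlinarith [mul_le_mul_of_nonneg_left h1 (pow_nonneg hs 3),
    mul_le_mul_of_nonneg_left h2 (pow_nonneg hs 2), mul_le_mul_of_nonneg_left h3 hs]

theorem sum_of_squared_logarithms_four
    (a₁ a₂ a₃ a₄ b₁ b₂ b₃ b₄ : ℝ)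
    (ha₁ : 0 < a₁) (ha₂ : 0 < a₂) (ha₃ : 0 < a₃) (ha₄ : 0 < a₄)
    (hb₁ : 0 < b₁) (hb₂ : 0 < b₂) (hb₃ : 0 < b₃) (hb₄ : 0 < b₄)
    (h1 : a₁ + a₂ + a₃ + a₄ ≤ b₁ + b₂ + b₃ + b₄)
    (h2 : a₁ * a₂ + a₁ * a₃ + a₂ * a₃ + a₁ * a₄ + a₂ * a₄ + a₃ * a₄ ≤
          b₁ * b₂ + b₁ * b₃ + b₂ * b₃ + b₁ * b₄ + b₂ * b₄ + b₃ * b₄)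
    (h3 : a₁ * a₂ * a₃ + a₁ * a₂ * a₄ + a₂ * a₃ * a₄ + a₁ * a₃ * a₄ ≤
          b₁ * b₂ * b₃ + b₁ * b₂ * b₄ + b₂ * b₃ * b₄ + b₁ * b₃ * b₄)
    (h4 : a₁ * a₂ * a₃ * a₄ = b₁ * b₂ * b₃ * b₄) :
    (Real.log a₁) ^ 2 + (Real.log a₂) ^ 2 + (Real.log a₃) ^ 2 + (Real.log a₄) ^ 2 ≤
      (Real.log b₁) ^ 2 + (Real.log b₂) ^ 2 + (Real.log b₃) ^ 2 + (Real.log b₄) ^ 2 := by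
  simpa [Fin.sum_univ_four] using sum_log_sq_le_of_prod_add_le (t := Finset.univ)
    (a := ![a₁, a₂, a₃, a₄]) (b := ![b₁, b₂, b₃, b₄])
    (by simp [Fin.forall_fin_succ, ha₁, ha₂, ha₃, ha₄])
    (by simp [Fin.forall_fin_succ, hb₁, hb₂, hb₃, hb₄])
    (by simpa [Fin.prod_univ_four] using h4)
    fun s hs => by
      simpa [Fin.prod_univ_four] using prod_four_add_le_of_esymm_le hs.le h1 h2 h3 h4.le
end

section
/- Let n ≥ 2, let I ⊆ ℝ be an open interval, let k ∈ {0,1,…,n−1}, and let f ∈ C^n(I) satisfy (−1)^{n+k}(x^k f'(x))^{(n−1)} ≤ 0 for all x ∈ I. Then for any pairwise distinct points y_1, y_2, …, y_n ∈ I one has Σ_{i=1}^n f'(y_i)·(−y_i)^k / ∏_{j≠i}(y_j − y_i) ≥ 0. -/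
/-!
Up to the sign `(-1) ^ (n - 1 + k)`, the sum is the divided difference of `g x = x ^ k * f' x`
at the nodes `y i`. Subtracting from `g` its Lagrange interpolant `P` at these nodes leaves a
`C^(n-1)` function with `n` zeros in `I`, so by Rolle's theorem applied `n - 1` times
`g⁽ⁿ⁻¹⁾ ξ = P⁽ⁿ⁻¹⁾ = (n - 1)! * (leading coefficient of P)` for some `ξ ∈ I`, and the leading
coefficient of `P` is that divided difference. The hypothesis fixes the sign of `g⁽ⁿ⁻¹⁾ ξ`.
-/

open Finset Polynomial Set
open scoped Nat

noncomputable def dividedDifference {ι K : Type*} [Fintype ι] [DecidableEq ι] [Field K]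
    (g : K → K) (x : ι → K) : K :=
  ∑ i, g (x i) / ∏ j ∈ univ.erase i, (x i - x j)

theorem Polynomial.iteratedDeriv_eval {𝕜 : Type*} [NontriviallyNormedField 𝕜] (p : 𝕜[X])
    (m : ℕ) : iteratedDeriv m (fun x => p.eval x) = fun x => (derivative^[m] p).eval x := by
  induction m generalizing p with
  | zero => simp
  | succ m ih =>
    have hderiv : deriv (fun x => p.eval x) = fun x => p.derivative.eval x := by
      ext
      exact p.deriv
    rw [iteratedDeriv_succ', hderiv, ih, Function.iterate_succ_apply]

theorem Lagrange.iterate_derivative_interpolate_fin {F : Type*} [Field F] {m : ℕ}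
    {v : Fin (m + 1) → F} (hv : Function.Injective v) (g : F → F) :
    derivative^[m] (interpolate univ v (g ∘ v)) = C (m ! * dividedDifference g v) := by
  rw [iterate_derivative_interpolate (s := univ) (g ∘ v) hv.injOn (by simp)]
  simp [dividedDifference, Finset.mul_sum]

theorem exists_iteratedDeriv_eq_zero_of_strictMono {s : Set ℝ} (hso : IsOpen s)
    (hsc : s.OrdConnected) {m : ℕ} {h : ℝ → ℝ} (hh : ContDiffOn ℝ m h s)
    {x : Fin (m + 1) → ℝ} (hx : StrictMono x) (hxs : ∀ i, x i ∈ s) (hzero : ∀ i, h (x i) = 0) :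
    ∃ ξ ∈ s, iteratedDeriv m h ξ = 0 := by
  induction m generalizing h with
  | zero => exact ⟨x 0, hxs 0, by simpa using hzero 0⟩
  | succ m ih =>
    have hIcc (i : Fin (m + 1)) : Icc (x i.castSucc) (x i.succ) ⊆ s :=
      hsc.out (hxs _) (hxs _)
    have hrolle (i : Fin (m + 1)) : ∃ c ∈ Ioo (x i.castSucc) (x i.succ), deriv h c = 0 :=
      exists_deriv_eq_zero (hx Fin.castSucc_lt_succ) (hh.continuousOn.mono (hIcc i))
        ((hzero _).trans (hzero _).symm)
    choose z hz hderiv using hrolle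
    have hzmono : StrictMono z := fun i j hij =>
      calc z i < x i.succ := (hz i).2
        _ ≤ x j.castSucc := hx.monotone (Fin.succ_le_castSucc_iff.mpr hij)
        _ < z j := (hz j).1
    obtain ⟨ξ, hξ, hξ0⟩ := ih (hh.deriv_of_isOpen hso (by norm_cast)) hzmono
      (fun i => hIcc i (Ioo_subset_Icc_self (hz i))) hderiv
    exact ⟨ξ, hξ, by rwa [iteratedDeriv_succ']⟩

theorem exists_iteratedDeriv_eq_zero_of_injective {s : Set ℝ} (hso : IsOpen s)
    (hsc : s.OrdConnected) {m : ℕ} {h : ℝ → ℝ} (hh : ContDiffOn ℝ m h s)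
    {x : Fin (m + 1) → ℝ} (hx : Function.Injective x) (hxs : ∀ i, x i ∈ s)
    (hzero : ∀ i, h (x i) = 0) : ∃ ξ ∈ s, iteratedDeriv m h ξ = 0 :=
  exists_iteratedDeriv_eq_zero_of_strictMono hso hsc hh
    ((Tuple.monotone_sort x).strictMono_of_injective (hx.comp (Tuple.sort x).injective))
    (fun _ => hxs _) (fun _ => hzero _)

theorem exists_iteratedDeriv_eq_factorial_mul_dividedDifference {s : Set ℝ} (hso : IsOpen s)
    (hsc : s.OrdConnected) {m : ℕ} {g : ℝ → ℝ} (hg : ContDiffOn ℝ m g s)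
    {x : Fin (m + 1) → ℝ} (hx : Function.Injective x) (hxs : ∀ i, x i ∈ s) :
    ∃ ξ ∈ s, iteratedDeriv m g ξ = m ! * dividedDifference g x := by
  set P := Lagrange.interpolate univ x (g ∘ x)
  have hP : ContDiff ℝ m fun z => P.eval z := by simpa using P.contDiff_aeval (𝕜 := ℝ) m
  obtain ⟨ξ, hξ, hξ0⟩ := exists_iteratedDeriv_eq_zero_of_injective hso hsc
    (hg.sub hP.contDiffOn) hx hxs
    fun i => sub_eq_zero.mpr (Lagrange.eval_interpolate_at_node (g ∘ x) hx.injOn (mem_univ i)).symm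
  refine ⟨ξ, hξ, ?_⟩
  rw [iteratedDeriv_fun_sub (hg.contDiffAt (hso.mem_nhds hξ)) hP.contDiffAt, sub_eq_zero,
    P.iteratedDeriv_eval, Lagrange.iterate_derivative_interpolate_fin hx] at hξ0
  simpa only [eval_C] using hξ0

theorem Finset.prod_sub_eq_neg_one_pow_mul_prod_sub {ι R : Type*} [CommRing R] (s : Finset ι)
    (x : ι → R) (a : R) : ∏ j ∈ s, (x j - a) = (-1) ^ #s * ∏ j ∈ s, (a - x j) := by
  rw [← prod_neg]
  simp

theorem key_sum_nonneg_general
    (n : ℕ) (I : Set ℝ) (hIopen : IsOpen I) (hIconn : I.OrdConnected)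
    (k : ℕ) (f : ℝ → ℝ) (hf : ContDiffOn ℝ n f I)
    (hder : ∀ x ∈ I, (-1 : ℝ) ^ (n + k) *
      iteratedDerivWithin (n - 1) (fun z => z ^ k * derivWithin f I z) I x ≤ 0)
    (y : Fin n → ℝ) (hyI : ∀ i, y i ∈ I) (hinj : Function.Injective y) :
    0 ≤ ∑ i, derivWithin f I (y i) * (-(y i)) ^ k /
      ∏ j ∈ Finset.univ.erase i, (y j - y i) := by
  cases n with
  | zero => simp
  | succ m =>
  set g : ℝ → ℝ := fun z => z ^ k * derivWithin f I z
  have hg : ContDiffOn ℝ m g I :=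
    (contDiff_id.pow k).contDiffOn.mul (hf.derivWithin hIopen.uniqueDiffOn (by simp))
  obtain ⟨ξ, hξ, hgξ⟩ :=
    exists_iteratedDeriv_eq_factorial_mul_dividedDifference hIopen hIconn hg hinj hyI
  have hsum : ∑ i, derivWithin f I (y i) * (-(y i)) ^ k / ∏ j ∈ univ.erase i, (y j - y i) =
      (-1) ^ (m + k) * dividedDifference g y := by
    rw [dividedDifference, mul_sum]
    refine sum_congr rfl fun i _ => ?_
    rw [prod_sub_eq_neg_one_pow_mul_prod_sub, card_erase_of_mem (mem_univ i), card_fin,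
      Nat.add_sub_cancel, neg_pow, div_mul_eq_div_div_swap, div_eq_mul_inv _ ((-1 : ℝ) ^ m),
      ← inv_pow, inv_neg_one]
    ring
  have hsign : 0 ≤ (m ! : ℝ) * ((-1) ^ (m + k) * dividedDifference g y) := by
    have := hder ξ hξ
    rw [Nat.add_sub_cancel, iteratedDerivWithin_of_isOpen hIopen hξ, hgξ] at this
    linarith [show (-1 : ℝ) ^ (m + 1 + k) * (m ! * dividedDifference g y) =
      -(m ! * ((-1) ^ (m + k) * dividedDifference g y)) by ring]
  rw [hsum]
  exact (mul_nonneg_iff_of_pos_left (by positivity)).mp hsign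

theorem key_sum_nonneg
    (n : ℕ) (hn : 2 ≤ n) (I : Set ℝ) (hIopen : IsOpen I) (hIconn : I.OrdConnected)
    (k : ℕ) (hk : k < n) (f : ℝ → ℝ) (hf : ContDiffOn ℝ n f I)
    (hder : ∀ x ∈ I, (-1 : ℝ) ^ (n + k) *
      iteratedDerivWithin (n - 1) (fun z => z ^ k * derivWithin f I z) I x ≤ 0)
    (y : Fin n → ℝ) (hyI : ∀ i, y i ∈ I) (hinj : Function.Injective y) :
    0 ≤ ∑ i, derivWithin f I (y i) * (-(y i)) ^ k /
      ∏ j ∈ Finset.univ.erase i, (y j - y i) :=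
  key_sum_nonneg_general n I hIopen hIconn k f hf hder y hyI hinj
end
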